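/- arXiv:1304.4609 — 3 statements merged into one kernel-verified Lean document; each statement's English description precedes it below -/
import Mathlib

section
/- Let r > 0, γ ≥ 0, and u ∈ (0,1). Define f_γ(u) := (1 + (γ+r)u)(1-u)^r - (1 + γu). Then f_γ(u) < 0. -/
theorem stmt1 (r γ u : ℝ) (hr : 0 < r) (hγ : 0 ≤ γ) (hu : u ∈ Set.Ioo (0:ℝ) 1) :
    (1 + (γ + r) * u) * (1 - u) ^ r - (1 + γ * u) < 0 := by
  obtain ⟨hu0, hu1⟩ := hu
  have h1u : 0 < 1 - u := by linarith
  have hlog : Real.log (1 - u) < -u := by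
    have := Real.log_lt_sub_one_of_pos h1u (by linarith)
    linarith
  have h2 : (1 - u) ^ r < Real.exp (-(r * u)) := by
    rw [Real.rpow_def_of_pos h1u]
    exact Real.exp_lt_exp.mpr (by nlinarith)
  have hc : 0 < 1 + (γ + r) * u := by nlinarith
  have h3 : (1 + (γ + r) * u) * (1 - u) ^ r < (1 + (γ + r) * u) * Real.exp (-(r * u)) :=
    mul_lt_mul_of_pos_left h2 hc
  have hE : 1 + r * u ≤ Real.exp (r * u) := by
    have := Real.add_one_le_exp (r * u); linarith
  have hEmul : Real.exp (r * u) * Real.exp (-(r * u)) = 1 := by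
    rw [← Real.exp_add]; simp
  have hEpos : 0 < Real.exp (-(r * u)) := Real.exp_pos _
  have h4 : (1 + (γ + r) * u) * Real.exp (-(r * u)) ≤ 1 + γ * u := by
    have hE1 : Real.exp (-(r * u)) ≤ 1 := Real.exp_le_one_iff.mpr (by nlinarith)
    nlinarith [hEpos, hEmul, mul_le_mul_of_nonneg_right hE hEpos.le,
      mul_nonneg (mul_nonneg hγ hu0.le) (sub_nonneg.mpr hE1)]
  linarith
end

section
/- Let q > 5 be real, and let W be a real-valued random variable with E W = 0, E W² > 0, and E|W|^{q} < ∞. For v ∈ (0,∞), define ψ_v(u) := E|v + uW|^{q-4} for u ≥ 0. Then ψ_v is strictly increasing on [0,∞). -/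
/-!
With `g = |·| ^ (q - 4)`, strictly convex on `ℝ` because `q - 4 > 1`, we have
`ψ_v(u) = E g(v + u W)`. As an average of convex functions of `u`, `ψ_v` is convex. Since
`E (v + u W) = v` and `v + u W` is not a.s. constant for `u ≠ 0`, strict Jensen gives
`ψ_v(0) = g(v) < ψ_v(u)`. A convex function on `[0, ∞)` whose value at `0` lies strictly below
all its other values is strictly increasing.
-/

open MeasureTheory Set

theorem strictConvexOn_abs_rpow {p : ℝ} (hp : 1 < p) :
    StrictConvexOn ℝ univ fun x : ℝ => |x| ^ p := by
  refine ⟨convex_univ, fun x _ y _ hxy a b ha hb hab => ?_⟩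
  simp only [smul_eq_mul]
  have hp0 : 0 ≤ p := by linarith
  -- When `|x| = |y|` strict convexity of `t ↦ t ^ p` gives nothing; then `y = -x` and the
  -- combination is strictly shorter than `x` instead.
  by_cases habs : |x| = |y|
  · obtain rfl : y = -x := by linarith [(abs_eq_abs.mp habs).resolve_left hxy]
    have hx : x ≠ 0 := by rintro rfl; simp at hxy
    have hshrink : |a * x + b * -x| < |x| := by
      rw [show a * x + b * -x = (a - b) * x by ring, abs_mul]
      exact mul_lt_of_lt_one_left (abs_pos.mpr hx)
        (abs_sub_lt_iff.mpr ⟨by linarith, by linarith⟩)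
    calc |a * x + b * -x| ^ p < |x| ^ p :=
          Real.rpow_lt_rpow (abs_nonneg _) hshrink (by linarith)
      _ = a * |x| ^ p + b * |-x| ^ p := by rw [abs_neg, ← add_mul, hab, one_mul]
  · have htri : |a * x + b * y| ≤ a * |x| + b * |y| := by
      simpa [abs_mul, abs_of_pos ha, abs_of_pos hb] using abs_add_le (a * x) (b * y)
    calc |a * x + b * y| ^ p ≤ (a * |x| + b * |y|) ^ p :=
          Real.rpow_le_rpow (abs_nonneg _) htri hp0
      _ < a * |x| ^ p + b * |y| ^ p := by
          simpa using (strictConvexOn_rpow hp).2 (abs_nonneg x) (abs_nonneg y) habs ha hb hab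

theorem ConvexOn.comp_const_add_mul {g : ℝ → ℝ} (hg : ConvexOn ℝ univ g) (v w : ℝ) :
    ConvexOn ℝ univ fun u => g (v + u * w) := by
  refine ⟨convex_univ, fun x _ y _ a b ha hb hab => ?_⟩
  have hcomb : v + (a • x + b • y) * w = a • (v + x * w) + b • (v + y * w) := by
    simp only [smul_eq_mul]
    linear_combination (-v) * hab
  simpa only [hcomb] using hg.2 (mem_univ _) (mem_univ _) ha hb hab

theorem ConvexOn.strictMonoOn_Ici_of_forall_lt {f : ℝ → ℝ} {a : ℝ}
    (hf : ConvexOn ℝ (Ici a) f) (h : ∀ u, a < u → f a < f u) : StrictMonoOn f (Ici a) := by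
  intro x hx y hy hxy
  rcases (mem_Ici.mp hx).eq_or_lt with rfl | hax
  · exact h y hxy
  · have hx_mem : x ∈ openSegment ℝ a y := by
      rw [openSegment_eq_Ioo (hax.trans hxy)]
      exact ⟨hax, hxy⟩
    exact hf.lt_right_of_left_lt self_mem_Ici hy hx_mem (h x hax)

section Integral

variable {Ω : Type*} [MeasurableSpace Ω] {μ : Measure Ω}

theorem convexOn_integral {E : Type*} [AddCommGroup E] [Module ℝ E] {s : Set E}
    {F : E → Ω → ℝ} (hs : Convex ℝ s)
    (hF : ∀ ω, ConvexOn ℝ s (F · ω)) (hi : ∀ x ∈ s, Integrable (F x) μ) :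
    ConvexOn ℝ s fun x => ∫ ω, F x ω ∂μ := by
  refine ⟨hs, fun x hx y hy a b ha hb hab => ?_⟩
  simp only [smul_eq_mul]
  calc ∫ ω, F (a • x + b • y) ω ∂μ ≤ ∫ ω, (a * F x ω + b * F y ω) ∂μ :=
        integral_mono (hi _ (hs hx hy ha hb hab))
          (((hi x hx).const_mul a).add ((hi y hy).const_mul b))
          fun ω => (hF ω).2 hx hy ha hb hab
    _ = a * ∫ ω, F x ω ∂μ + b * ∫ ω, F y ω ∂μ := by
        rw [integral_add ((hi x hx).const_mul a) ((hi y hy).const_mul b), integral_const_mul,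
          integral_const_mul]

theorem integrable_abs_const_add_mul_rpow [IsFiniteMeasure μ] {W : Ω → ℝ} {p q : ℝ}
    (hW : AEStronglyMeasurable W μ) (hp : 0 < p) (hpq : p ≤ q)
    (hint : Integrable (fun ω => |W ω| ^ q) μ) (v u : ℝ) :
    Integrable (fun ω => |v + u * W ω| ^ p) μ := by
  have hWp : MemLp W (ENNReal.ofReal p) μ := by
    rw [← integrable_norm_rpow_iff hW (by simpa) ENNReal.ofReal_ne_top,
      ENNReal.toReal_ofReal hp.le]
    exact integrable_norm_rpow_of_le hW hp.le (hp.le.trans hpq) hpq hint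
  simpa [ENNReal.toReal_ofReal hp.le] using
    ((memLp_const v).add (hWp.const_mul u)).integrable_norm_rpow (by simpa) ENNReal.ofReal_ne_top

theorem StrictConvexOn.lt_integral_comp_const_add_mul [IsProbabilityMeasure μ] {g : ℝ → ℝ}
    (hg : StrictConvexOn ℝ univ g) (hgc : Continuous g) {W : Ω → ℝ} (hW : Integrable W μ)
    (hmean : ∫ ω, W ω ∂μ = 0) (hW0 : ¬ W =ᵐ[μ] 0) {v u : ℝ} (hu : u ≠ 0)
    (hgi : Integrable (fun ω => g (v + u * W ω)) μ) :
    g v < ∫ ω, g (v + u * W ω) ∂μ := by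
  have hX : Integrable (fun ω => v + u * W ω) μ := (integrable_const v).add (hW.const_mul u)
  have hmeanX : ∫ ω, v + u * W ω ∂μ = v := by
    simp [integral_add (integrable_const v) (hW.const_mul u), integral_const_mul, hmean]
  have hnonconst : ¬ (fun ω => v + u * W ω) =ᵐ[μ] Function.const Ω v := fun h =>
    hW0 <| h.mono fun ω hω => by simpa [hu] using hω
  simpa only [average_eq_integral, hmeanX, hnonconst, false_or] using
    hg.ae_eq_const_or_map_average_lt hgc.continuousOn isClosed_univ (by simp) hX hgi

end Integral

theorem stmt4_general {Ω : Type*} [MeasurableSpace Ω] (μ : Measure Ω) [IsProbabilityMeasure μ]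
    (W : Ω → ℝ) (hW : Measurable W) (q v : ℝ) (hq : 5 < q)
    (hint : Integrable (fun ω => |W ω| ^ q) μ)
    (hmean : ∫ ω, W ω ∂μ = 0)
    (hvar : 0 < ∫ ω, (W ω) ^ 2 ∂μ) :
    StrictMonoOn (fun u : ℝ => ∫ ω, |v + u * W ω| ^ (q - 4) ∂μ) (Set.Ici 0) := by
  have hp : 1 < q - 4 := by linarith
  have hg := strictConvexOn_abs_rpow hp
  have hW0 : ¬ W =ᵐ[μ] 0 := fun h => hvar.ne' <| by
    rw [integral_congr_ae (h.mono fun ω hω => congrArg (· ^ 2) hω)]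
    simp
  have hWi : Integrable W μ := (integrable_norm_iff hW.aestronglyMeasurable).mp <| by
    simpa using integrable_abs_const_add_mul_rpow hW.aestronglyMeasurable one_pos
      (by linarith) hint 0 1
  have hi := integrable_abs_const_add_mul_rpow hW.aestronglyMeasurable (by linarith)
    (by linarith : q - 4 ≤ q) hint v
  refine ConvexOn.strictMonoOn_Ici_of_forall_lt ?_ fun u hu => ?_
  · exact convexOn_integral (convex_Ici 0)
      (fun ω => (hg.convexOn.comp_const_add_mul v (W ω)).subset (subset_univ _) (convex_Ici 0))
      fun u _ => hi u
  · simpa using hg.lt_integral_comp_const_add_mul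
      (continuous_abs.rpow_const fun _ => Or.inr (by linarith)) hWi hmean hW0 hu.ne' (hi u)

theorem stmt4 {Ω : Type*} [MeasurableSpace Ω] (μ : Measure Ω) [IsProbabilityMeasure μ]
    (W : Ω → ℝ) (hW : Measurable W) (q v : ℝ) (hq : 5 < q) (hv : 0 < v)
    (hint : Integrable (fun ω => |W ω| ^ q) μ)
    (hmean : ∫ ω, W ω ∂μ = 0)
    (hvar : 0 < ∫ ω, (W ω) ^ 2 ∂μ) :
    StrictMonoOn (fun u : ℝ => ∫ ω, |v + u * W ω| ^ (q - 4) ∂μ) (Set.Ici 0) :=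
  stmt4_general μ W hW q v hq hint hmean hvar
end

section
/- For every real p > 2 and positive reals A, B, the class of finite sequences (X₁,…,X_n) of independent zero-mean random variables with ∑ E X_i² = B and ∑ E|X_i|^p = A (with equality) is nonempty. -/
/-!
Take `n` i.i.d. copies of the symmetric law with mass `q` at `±a` and `1 - 2q` at `0`. Each copy
has mean zero, `E X² = 2qa²` and `E|X|^p = 2qa^p`, so the sums are `2nqa²` and `2nqa^p`. Their
ratio `a^(p-2)` fixes `a`; then `n = ⌈B / a²⌉₊` and `q = B / (2na²)` give `2q ≤ 1`.
-/

open MeasureTheory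

/-- The set of values `E |X₁ + ⋯ + Xₙ|^p` over all finite sequences of independent
zero-mean random variables (encoded by the product of their laws) with
`∑ E Xᵢ² = B` and `∑ E|Xᵢ|^p = A`. -/
noncomputable def rosSet (p A B : ℝ) : Set ℝ :=
  {E | ∃ (n : ℕ) (ν : Fin n → Measure ℝ),
    (∀ i, IsProbabilityMeasure (ν i)) ∧
    (∀ i, Integrable (fun x : ℝ => x) (ν i)) ∧
    (∀ i, (∫ x, x ∂(ν i)) = 0) ∧
    (∀ i, Integrable (fun x : ℝ => x ^ 2) (ν i)) ∧
    (∀ i, Integrable (fun x : ℝ => |x| ^ p) (ν i)) ∧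
    (∑ i, ∫ x, x ^ 2 ∂(ν i)) = B ∧
    (∑ i, ∫ x, |x| ^ p ∂(ν i)) = A ∧
    E = ∫ x, |∑ i, x i| ^ p ∂(Measure.pi ν)}

noncomputable def symmThreePoint (q a : ℝ) : Measure ℝ :=
  ENNReal.ofReal (1 - 2 * q) • Measure.dirac 0 +
    ENNReal.ofReal q • (Measure.dirac a + Measure.dirac (-a))

namespace symmThreePoint

variable {q : ℝ} (f : ℝ → ℝ) (a : ℝ)

lemma integrable : Integrable f (symmThreePoint q a) :=
  ((integrable_dirac (by simp)).smul_measure (by simp)).add_measure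
    (((integrable_dirac (by simp)).add_measure (integrable_dirac (by simp))).smul_measure (by simp))

variable (hq : 0 ≤ q) (hq' : 2 * q ≤ 1)
include hq hq'

lemma isProbabilityMeasure : IsProbabilityMeasure (symmThreePoint q a) := by
  constructor
  simp only [symmThreePoint, Measure.add_apply, Measure.smul_apply, measure_univ, smul_eq_mul]
  rw [mul_one, mul_add, mul_one, ← ENNReal.ofReal_add hq hq,
    ← ENNReal.ofReal_add (by linarith) (by linarith), show 1 - 2 * q + (q + q) = 1 by ring,
    ENNReal.ofReal_one]

lemma integral_eq :
    ∫ x, f x ∂(symmThreePoint q a) = (1 - 2 * q) * f 0 + q * (f a + f (-a)) := by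
  have hf := integrable f a (q := q)
  rw [symmThreePoint, integral_add_measure hf.left_of_add_measure hf.right_of_add_measure,
    integral_smul_measure, integral_smul_measure,
    integral_add_measure (integrable_dirac (by simp)) (integrable_dirac (by simp))]
  simp [sub_nonneg.2 hq', hq]

lemma integral_of_odd (hf : ∀ x, f (-x) = -f x) : ∫ x, f x ∂(symmThreePoint q a) = 0 := by
  have hf0 : f 0 = 0 := by
    have := hf 0
    rw [neg_zero] at this
    linarith
  rw [integral_eq f a hq hq', hf, hf0]
  ring

lemma integral_of_even (hf : ∀ x, f (-x) = f x) (hf0 : f 0 = 0) :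
    ∫ x, f x ∂(symmThreePoint q a) = 2 * q * f a := by
  rw [integral_eq f a hq hq', hf, hf0]
  ring

end symmThreePoint

lemma rosSet_nonempty_of_iid {p A B : ℝ} (ν : Measure ℝ) [IsProbabilityMeasure ν] (n : ℕ)
    (hint : Integrable (fun x => x) ν) (hmean : ∫ x, x ∂ν = 0)
    (hint₂ : Integrable (fun x => x ^ 2) ν) (hintp : Integrable (fun x => |x| ^ p) ν)
    (hB : n * ∫ x, x ^ 2 ∂ν = B) (hA : n * ∫ x, |x| ^ p ∂ν = A) :
    (rosSet p A B).Nonempty :=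
  ⟨_, n, fun _ => ν, fun _ => ‹_›, fun _ => hint, fun _ => hmean, fun _ => hint₂, fun _ => hintp,
    by simpa using hB, by simpa using hA, rfl⟩

lemma exists_rpow_eq_mul_sq {p c : ℝ} (hp : p ≠ 2) (hc : 0 < c) :
    ∃ a > 0, a ^ p = c * a ^ 2 := by
  refine ⟨c ^ (p - 2)⁻¹, by positivity, ?_⟩
  have hpow : (c ^ (p - 2)⁻¹) ^ (p - 2) = c := by
    rw [← Real.rpow_mul hc.le, inv_mul_cancel₀ (sub_ne_zero.2 hp), Real.rpow_one]
  calc (c ^ (p - 2)⁻¹) ^ p = (c ^ (p - 2)⁻¹) ^ (p - 2 + 2) := by rw [sub_add_cancel]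
    _ = c * (c ^ (p - 2)⁻¹) ^ 2 := by
      rw [Real.rpow_add (by positivity), hpow, Real.rpow_two]

theorem stmt19 (p A B : ℝ) (hp : 2 < p) (hA : 0 < A) (hB : 0 < B) :
    (rosSet p A B).Nonempty := by
  obtain ⟨a, ha, hap⟩ := exists_rpow_eq_mul_sq hp.ne' (div_pos hA hB)
  set n := ⌈B / a ^ 2⌉₊
  have hn : (0 : ℝ) < n := Nat.cast_pos.2 (Nat.ceil_pos.2 (by positivity))
  set q := B / (2 * n * a ^ 2) with hq_def
  have hq : 0 ≤ q := by positivity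
  have hq' : 2 * q ≤ 1 :=
    calc 2 * q = B / a ^ 2 / n := by rw [hq_def]; field_simp
      _ ≤ 1 := (div_le_one hn).2 (Nat.le_ceil _)
  have := symmThreePoint.isProbabilityMeasure a hq hq'
  refine rosSet_nonempty_of_iid (symmThreePoint q a) n (symmThreePoint.integrable _ a)
    (symmThreePoint.integral_of_odd (fun x => x) a hq hq' fun _ => rfl)
    (symmThreePoint.integrable _ a) (symmThreePoint.integrable _ a) ?_ ?_
  · rw [symmThreePoint.integral_of_even (fun x => x ^ 2) a hq hq' (fun _ => neg_sq _)
      (zero_pow two_ne_zero), hq_def]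
    field_simp
  · rw [symmThreePoint.integral_of_even (fun x => |x| ^ p) a hq hq' (fun _ => by rw [abs_neg])
      (by rw [abs_zero, Real.zero_rpow (by linarith)]), abs_of_pos ha, hap, hq_def]
    field_simp
end
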